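/- Let p ∈ ℝ² and let F : ℝ² → ℂ be continuously differentiable and non-vanishing on a punctured neighborhood of p. Define the local wavenumber k(x,t) = Im(conj(F(x,t))·∂ₓF(x,t))/|F(x,t)|² and the local frequency ω(x,t) = −Im(conj(F(x,t))·∂ₜF(x,t))/|F(x,t)|². If k and ω are bounded on the punctured neighborhood, then the dislocation strength integral I(ε) = ∫₀^{2π} Im(conj(F(γ_ε(θ)))·(d/dθ)F(γ_ε(θ)))/|F(γ_ε(θ))|² dθ, taken along the circle γ_ε(θ) = p + ε(cos θ, sin θ), tends to 0 as ε → 0⁺. In particular, no wavefront dislocation occurs at p. -/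

import Mathlib

/-!
Along the circle `θ ↦ p + ε (cos θ, sin θ)` the chain rule writes the phase derivative
`Im (conj F · dF/dθ) / |F|²` as `ε (-k sin θ - ω cos θ)`. Bounded `k` and `ω` therefore bound the
integrand by `2 M ε`, and the integral over `[0, 2π]` is `O(ε)`.
-/

open Real Filter Topology ComplexConjugate

section NormedSpace

variable {E : Type*} [NormedAddCommGroup E] [NormedSpace ℝ E]

/-- The rate of change of the phase of `F` at `q` in the direction `v`; the local wavenumber is
`localPhaseRate F q (1, 0)` and the local frequency is `-localPhaseRate F q (0, 1)`. -/
noncomputable def localPhaseRate (F : E → ℂ) (q v : E) : ℝ :=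
  (conj (F q) * fderiv ℝ F q v).im / ‖F q‖ ^ 2

theorem localPhaseRate_smul_add_smul (F : E → ℂ) (q u w : E) (a b : ℝ) :
    localPhaseRate F q (a • u + b • w) = a * localPhaseRate F q u + b * localPhaseRate F q w := by
  simp only [localPhaseRate, map_add, map_smul, mul_add, mul_smul_comm, Complex.add_im,
    Complex.smul_im, smul_eq_mul]
  ring

theorem add_smul_mem_ball_sdiff {p v : E} {ε r : ℝ} (hε : 0 < ε) (hεr : ε < r) (hv₀ : v ≠ 0)
    (hv₁ : ‖v‖ ≤ 1) :
    p + ε • v ∈ Metric.ball p r \ {p} := by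
  refine ⟨?_, by simp [hε.ne', hv₀]⟩
  rw [Metric.mem_ball, dist_eq_norm, add_sub_cancel_left, norm_smul, Real.norm_of_nonneg hε.le]
  nlinarith [norm_nonneg v]

end NormedSpace

theorem abs_localPhaseRate_le (F : ℝ × ℝ → ℂ) (q v : ℝ × ℝ) :
    |localPhaseRate F q v| ≤
      |v.1| * |localPhaseRate F q (1, 0)| + |v.2| * |localPhaseRate F q (0, 1)| := by
  have hv : localPhaseRate F q v =
      v.1 * localPhaseRate F q (1, 0) + v.2 * localPhaseRate F q (0, 1) := by
    rw [← localPhaseRate_smul_add_smul]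
    simp
  rw [hv, ← abs_mul, ← abs_mul]
  exact abs_add_le _ _

theorem cos_sin_ne_zero (θ : ℝ) : ((cos θ, sin θ) : ℝ × ℝ) ≠ 0 := by
  intro h
  have := sin_sq_add_cos_sq θ
  simp_all [Prod.ext_iff]

theorem norm_cos_sin_le_one (θ : ℝ) : ‖((cos θ, sin θ) : ℝ × ℝ)‖ ≤ 1 :=
  max_le (abs_cos_le_one θ) (abs_sin_le_one θ)

theorem hasDerivAt_circle (p : ℝ × ℝ) (ε θ : ℝ) :
    HasDerivAt (fun θ : ℝ => p + ε • ((cos θ, sin θ) : ℝ × ℝ)) (ε • (-sin θ, cos θ)) θ :=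
  (((hasDerivAt_cos θ).prodMk (hasDerivAt_sin θ)).const_smul ε).const_add p

theorem deriv_comp_circle {F : ℝ × ℝ → ℂ} {p : ℝ × ℝ} {ε θ : ℝ}
    (hF : DifferentiableAt ℝ F (p + ε • (cos θ, sin θ))) :
    deriv (fun θ' : ℝ => F (p + ε • (cos θ', sin θ'))) θ =
      fderiv ℝ F (p + ε • (cos θ, sin θ)) (ε • (-sin θ, cos θ)) :=
  (hF.hasFDerivAt.comp_hasDerivAt θ (hasDerivAt_circle p ε θ)).deriv

theorem abs_localPhaseRate_circle_tangent_le {F : ℝ × ℝ → ℂ} {q : ℝ × ℝ} {ε θ M : ℝ}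
    (hε : 0 ≤ ε) (hk : |localPhaseRate F q (1, 0)| ≤ M) (hω : |localPhaseRate F q (0, 1)| ≤ M) :
    |localPhaseRate F q (ε • (-sin θ, cos θ))| ≤ 2 * M * ε := by
  have hs := abs_sin_le_one θ
  have hc := abs_cos_le_one θ
  have hM : 0 ≤ M := (abs_nonneg _).trans hk
  calc |localPhaseRate F q (ε • (-sin θ, cos θ))|
      ≤ ε * |sin θ| * |localPhaseRate F q (1, 0)| + ε * |cos θ| * |localPhaseRate F q (0, 1)| := by
        simpa [abs_mul, abs_of_nonneg hε] using abs_localPhaseRate_le F q (ε • (-sin θ, cos θ))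
    _ ≤ ε * 1 * M + ε * 1 * M := by gcongr
    _ = 2 * M * ε := by ring

theorem tendsto_intervalIntegral_zero_of_abs_le {ι : Type*} {l : Filter ι} {f : ι → ℝ → ℝ}
    {g : ι → ℝ} {a b : ℝ} (hfg : ∀ᶠ i in l, ∀ θ, |f i θ| ≤ g i) (hg : Tendsto g l (𝓝 0)) :
    Tendsto (fun i => ∫ θ in a..b, f i θ) l (𝓝 0) := by
  have hbound : Tendsto (fun i => g i * |b - a|) l (𝓝 0) := by
    simpa using hg.mul_const |b - a|
  refine squeeze_zero_norm' ?_ hbound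
  filter_upwards [hfg] with i hi
  exact intervalIntegral.norm_integral_le_of_norm_le_const fun θ _ => hi θ

theorem no_dislocation_of_bounded_wavenumber_frequency
    (p : ℝ × ℝ) (F : ℝ × ℝ → ℂ) (r : ℝ) (hr : 0 < r)
    (hF : ContDiffOn ℝ 1 F (Metric.ball p r \ {p}))
    (M : ℝ)
    (hk : ∀ q ∈ Metric.ball p r \ {p},
      |((starRingEnd ℂ) (F q) * fderiv ℝ F q (1, 0)).im / ‖F q‖ ^ 2| ≤ M)
    (hω : ∀ q ∈ Metric.ball p r \ {p},
      |(-((starRingEnd ℂ) (F q) * fderiv ℝ F q (0, 1)).im) / ‖F q‖ ^ 2| ≤ M) :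
    Tendsto (fun ε : ℝ =>
      ∫ θ in (0:ℝ)..(2 * Real.pi),
        ((starRingEnd ℂ) (F (p + ε • (Real.cos θ, Real.sin θ))) *
          deriv (fun θ' : ℝ => F (p + ε • (Real.cos θ', Real.sin θ'))) θ).im /
        ‖F (p + ε • (Real.cos θ, Real.sin θ))‖ ^ 2)
      (𝓝[>] (0:ℝ)) (𝓝 0) := by
  have hU : IsOpen (Metric.ball p r \ {p}) := Metric.isOpen_ball.sdiff isClosed_singleton
  have hlin : Tendsto (fun ε : ℝ => 2 * M * ε) (𝓝[>] 0) (𝓝 0) := by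
    simpa using ((continuous_const_mul (2 * M)).tendsto 0).mono_left nhdsWithin_le_nhds
  refine tendsto_intervalIntegral_zero_of_abs_le ?_ hlin
  filter_upwards [Ioo_mem_nhdsGT hr] with ε ⟨hε, hεr⟩ θ
  have hq := add_smul_mem_ball_sdiff (p := p) hε hεr (cos_sin_ne_zero θ) (norm_cos_sin_le_one θ)
  have hωq := hω _ hq
  rw [neg_div, abs_neg] at hωq
  rw [deriv_comp_circle ((hF.contDiffAt (hU.mem_nhds hq)).differentiableAt one_ne_zero)]
  exact abs_localPhaseRate_circle_tangent_le hε.le (hk _ hq) hωq
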